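/- arXiv:math/0303152 — 8 statements merged into one kernel-verified Lean document; each statement's English description precedes it below -/
import Mathlib

section
/- For all integers k₁, k₂ and all polynomials f, g ∈ ℂ[X], the commutator of the operators E(k₁,f) and E(k₂,g) on ℂ[t,t⁻¹] satisfies ⁅E(k₁,f), E(k₂,g)⁆ = E(k₁+k₂, f(X+k₂)·g(X) − g(X+k₁)·f(X)), where f(X+k₂) and g(X+k₁) denote composition of f and g with the polynomials X+k₂ and X+k₁. -/
open Polynomial

/-- The endomorphism of `ℂ[t,t⁻¹]` (modeled as `ℤ →₀ ℂ`) sending `tⁿ` to `f(n)·t^{n+k}`;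
it represents the differential operator `t^k·f(D)` with `D = t·d/dt`. -/
noncomputable def E (k : ℤ) (f : Polynomial ℂ) : Module.End ℂ (ℤ →₀ ℂ) :=
  Finsupp.lsum ℂ fun n : ℤ => f.eval (n : ℂ) • Finsupp.lsingle (n + k)

lemma E_single (k : ℤ) (f : Polynomial ℂ) (n : ℤ) :
    E k f (Finsupp.single n 1) = f.eval (n : ℂ) • Finsupp.single (n + k) 1 := by
  rw [E, Finsupp.lsum_single]
  simp

theorem bracket_E (k₁ k₂ : ℤ) (f g : Polynomial ℂ) :
    ⁅E k₁ f, E k₂ g⁆ =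
      E (k₁ + k₂) (f.comp (X + C (k₂ : ℂ)) * g - g.comp (X + C (k₁ : ℂ)) * f) := by
  ext n : 2
  simp only [LinearMap.comp_apply, Finsupp.lsingle_apply]
  rw [show ∀ (A B : Module.End ℂ (ℤ →₀ ℂ)) (v : ℤ →₀ ℂ),
      ⁅A, B⁆ v = A (B v) - B (A v) from fun _ _ _ => rfl]
  rw [E_single, E_single, map_smul, map_smul, E_single, E_single, E_single]
  simp only [eval_sub, eval_mul, eval_comp, eval_add, eval_X, eval_C]
  push_cast
  ring_nf
  module
end

section
/- For every l ∈ ℤ, the family of polynomials (X^{2k} + (−X−l)^{2k})_{k ∈ ℕ} is a basis of the subspace P_l = {p ∈ ℂ[X] : p(−X−l) = p(X)}: the family is linearly independent over ℂ and its span equals P_l. -/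
/-!
The substitution `p ↦ p(-X - a)` is an involution, so it fixes every `X^{2k} + (-X - a)^{2k}`;
this polynomial has degree `2k` and leading coefficient `2`. Distinct degrees give linear
independence. Since the substitution multiplies the leading coefficient of `p` by
`(-1)^{deg p}`, a fixed polynomial has even degree `2k`, and subtracting `lc(p)/2` times the
`k`-th member of the family lowers its degree while keeping it fixed; induction on the degree
gives spanning.
-/

open Polynomial

namespace Polynomial

section LinearIndependent

variable {R ι : Type*} [CommRing R] [NoZeroDivisors R] [LinearOrder ι]

theorem linearIndependent_of_natDegree_strictMono {v : ι → R[X]} (hv : ∀ i, v i ≠ 0)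
    (hmono : StrictMono fun i => (v i).natDegree) : LinearIndependent R v := by
  rw [linearIndependent_iff']
  intro s
  induction s using Finset.induction_on_max with
  | empty => simp
  | insert a s ha ih =>
    intro g hsum i hi
    rw [Finset.sum_insert fun h => lt_irrefl a (ha a h)] at hsum
    have hlower : (∑ j ∈ s, g j • v j).coeff (v a).natDegree = 0 := by
      rw [finsetSum_coeff]
      refine Finset.sum_eq_zero fun j hj => ?_
      rw [coeff_smul, coeff_eq_zero_of_natDegree_lt (hmono (ha j hj)), smul_zero]
    have hga : g a = 0 := by
      have htop := congrArg (coeff · (v a).natDegree) hsum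
      simpa [hlower, hv a] using htop
    rcases Finset.mem_insert.1 hi with rfl | hi
    · exact hga
    · exact ih g (by simpa [hga] using hsum) i hi

end LinearIndependent

def compFixed {R : Type*} [CommSemiring R] (q : R[X]) : Submodule R R[X] where
  carrier := {p | p.comp q = p}
  add_mem' hp hr := by simp_all [add_comp]
  zero_mem' := zero_comp
  smul_mem' c p hp := by simp_all [smul_comp]

section Reflection

variable {R : Type*} [CommRing R]

theorem neg_X_sub_C_comp_self (a : R) : (-X - C a).comp (-X - C a) = X := by
  simp only [sub_comp, neg_comp, X_comp, C_comp]
  ring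

theorem even_natDegree_of_comp_neg_X_sub_C_eq [IsDomain R] [NeZero (2 : R)] {a : R} {p : R[X]}
    (hp : p.comp (-X - C a) = p) (hp0 : p ≠ 0) : Even p.natDegree := by
  have hdeg : (-X - C a).natDegree = 1 := by
    rw [← neg_add', natDegree_neg, natDegree_X_add_C]
  have hlc : (-X - C a).leadingCoeff = -1 := by
    rw [← neg_add', leadingCoeff_neg, leadingCoeff_X_add_C]
  have hneg_one : (-1 : R) ≠ 1 := fun h => two_ne_zero (α := R) (by linear_combination -h)
  have hlc_comp := leadingCoeff_comp (p := p) (hdeg ▸ one_ne_zero)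
  rw [hp, hlc] at hlc_comp
  rw [← neg_one_pow_eq_one_iff_even hneg_one]
  exact mul_left_cancel₀ (leadingCoeff_ne_zero.2 hp0) (hlc_comp.symm.trans (mul_one _).symm)

noncomputable def symmetrizedPow (a : R) (k : ℕ) : R[X] := X ^ (2 * k) + (-X - C a) ^ (2 * k)

theorem symmetrizedPow_eq (a : R) (k : ℕ) :
    symmetrizedPow a k = X ^ (2 * k) + (X + C a) ^ (2 * k) := by
  rw [symmetrizedPow, ← neg_add', Even.neg_pow (even_two_mul k)]

theorem symmetrizedPow_comp (a : R) (k : ℕ) :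
    (symmetrizedPow a k).comp (-X - C a) = symmetrizedPow a k := by
  rw [symmetrizedPow, add_comp, pow_comp, pow_comp, X_comp, neg_X_sub_C_comp_self, add_comm]

theorem degree_pow_X_add_C [Nontrivial R] (n : ℕ) (a : R) :
    ((X + C a) ^ n).degree = (n : WithBot ℕ) := by
  rw [degree_eq_natDegree ((monic_X_add_C a).pow n).ne_zero, natDegree_pow_X_add_C]

variable [Nontrivial R] [NeZero (2 : R)]

theorem degree_symmetrizedPow (a : R) (k : ℕ) : (symmetrizedPow a k).degree = (2 * k : ℕ) := by
  rw [symmetrizedPow_eq, degree_add_eq_of_leadingCoeff_add_ne_zero] <;>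
    simp [((monic_X_add_C a).pow _).leadingCoeff, degree_pow_X_add_C, one_add_one_eq_two,
      two_ne_zero]

theorem natDegree_symmetrizedPow (a : R) (k : ℕ) : (symmetrizedPow a k).natDegree = 2 * k :=
  natDegree_eq_of_degree_eq_some (degree_symmetrizedPow a k)

theorem leadingCoeff_symmetrizedPow (a : R) (k : ℕ) : (symmetrizedPow a k).leadingCoeff = 2 := by
  rw [symmetrizedPow_eq, leadingCoeff_add_of_degree_eq] <;>
    simp [((monic_X_add_C a).pow _).leadingCoeff, degree_pow_X_add_C, one_add_one_eq_two,
      two_ne_zero]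

theorem symmetrizedPow_ne_zero (a : R) (k : ℕ) : symmetrizedPow a k ≠ 0 :=
  leadingCoeff_ne_zero.1 (by rw [leadingCoeff_symmetrizedPow]; exact two_ne_zero)

theorem linearIndependent_symmetrizedPow [NoZeroDivisors R] (a : R) :
    LinearIndependent R (symmetrizedPow a) :=
  linearIndependent_of_natDegree_strictMono (symmetrizedPow_ne_zero a) fun i j hij => by
    simpa [natDegree_symmetrizedPow] using hij

end Reflection

section Field

variable {K : Type*} [Field K] [NeZero (2 : K)]

theorem mem_span_symmetrizedPow_of_comp_eq {a : K} {p : K[X]} (hp : p.comp (-X - C a) = p) :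
    p ∈ Submodule.span K (Set.range (symmetrizedPow a)) := by
  induction hn : p.natDegree using Nat.strong_induction_on generalizing p with
  | _ n ih =>
  by_cases hp0 : p = 0
  · simp [hp0]
  obtain ⟨k, hk⟩ := even_natDegree_of_comp_neg_X_sub_C_eq hp hp0
  have hc : p.leadingCoeff / 2 ≠ 0 := div_ne_zero (leadingCoeff_ne_zero.2 hp0) two_ne_zero
  set r := (p.leadingCoeff / 2) • symmetrizedPow a k with hr_def
  have hr : r ∈ Submodule.span K (Set.range (symmetrizedPow a)) :=
    Submodule.smul_mem _ _ (Submodule.subset_span ⟨k, rfl⟩)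
  have hpr : p - r ∈ Submodule.span K (Set.range (symmetrizedPow a)) := by
    by_cases hpr0 : p - r = 0
    · simp [hpr0]
    have hdeg : p.degree = r.degree := by
      rw [hr_def, smul_eq_C_mul, degree_C_mul hc, degree_symmetrizedPow, degree_eq_natDegree hp0,
        hk, two_mul]
    have hlc : p.leadingCoeff = r.leadingCoeff := by
      rw [hr_def, smul_eq_C_mul, leadingCoeff_mul, leadingCoeff_C, leadingCoeff_symmetrizedPow,
        div_mul_cancel₀ _ two_ne_zero]
    refine ih _ ?_ (by rw [sub_comp, hp, smul_comp, symmetrizedPow_comp]) rfl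
    rw [← hn]
    exact natDegree_lt_natDegree hpr0 (degree_sub_lt_left hdeg hp0 hlc)
  simpa using add_mem hpr hr

theorem span_symmetrizedPow (a : K) :
    Submodule.span K (Set.range (symmetrizedPow a)) = compFixed (-X - C a) :=
  le_antisymm (Submodule.span_le.2 (Set.range_subset_iff.2 (symmetrizedPow_comp a)))
    fun _ hp => mem_span_symmetrizedPow_of_comp_eq hp

end Field

end Polynomial

/-- The family `(X^{2k} + (−X−l)^{2k})_{k ∈ ℕ}` is a basis of
`P_l = {p ∈ ℂ[X] : p(−X−l) = p(X)}`: it is linearly independent and spans `P_l`. -/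
theorem P_basis (l : ℤ) :
    LinearIndependent ℂ
      (fun k : ℕ => (X : Polynomial ℂ) ^ (2 * k) + (-X - C (l : ℂ)) ^ (2 * k)) ∧
    (Submodule.span ℂ
        (Set.range fun k : ℕ => (X : Polynomial ℂ) ^ (2 * k) + (-X - C (l : ℂ)) ^ (2 * k)) :
      Set (Polynomial ℂ)) =
    {p : Polynomial ℂ | p.comp (-X - C (l : ℂ)) = p} :=
  ⟨linearIndependent_symmetrizedPow (l : ℂ), congrArg SetLike.coe (span_symmetrizedPow (l : ℂ))⟩
end

section
/- For each k ∈ ℤ define τ_k : ℂ[X] → ℂ[X] by τ_k(f) = −f(−X−k). Then (i) τ_k(τ_k(f)) = f for all f ∈ ℂ[X]; and (ii) for all k₁, k₂ ∈ ℤ and all f, g ∈ ℂ[X], τ_{k₁+k₂}( f(X+k₂)·g(X) − g(X+k₁)·f(X) ) = (τ_{k₁}f)(X+k₂)·(τ_{k₂}g)(X) − (τ_{k₂}g)(X+k₁)·(τ_{k₁}f)(X). (This expresses that the map θ₂ sending the differential operator t^k f(D) to −t^k f(−D−k) is an involution of the Lie algebra of differential operators on the circle, since the polynomial f(X+k₂)·g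 − g(X+k₁)·f represents the commutator of t^{k₁}f(D) and t^{k₂}g(D).) -/
open Polynomial

/-- `τ_k(f) = −f(−X−k)`, representing the map `θ₂ : t^k f(D) ↦ −t^k f(−D−k)`. -/
noncomputable def tau (k : ℤ) (f : Polynomial ℂ) : Polynomial ℂ :=
  -(f.comp (-X - C (k : ℂ)))

/-- `θ₂` is an involution of the Lie algebra of differential operators on the circle:
`τ_k` is an involution on each graded piece and intertwines the bracket polynomial
`f(X+k₂)·g − g(X+k₁)·f` (which represents `⁅t^{k₁}f(D), t^{k₂}g(D)⁆`). -/
theorem tau_involution_and_bracket :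
    (∀ (k : ℤ) (f : Polynomial ℂ), tau k (tau k f) = f) ∧
    (∀ (k₁ k₂ : ℤ) (f g : Polynomial ℂ),
      tau (k₁ + k₂) (f.comp (X + C (k₂ : ℂ)) * g - g.comp (X + C (k₁ : ℂ)) * f) =
        (tau k₁ f).comp (X + C (k₂ : ℂ)) * tau k₂ g -
          (tau k₂ g).comp (X + C (k₁ : ℂ)) * tau k₁ f) := by
  constructor
  · intro k f
    apply Polynomial.funext
    intro x
    simp [tau, eval_comp]
  · intro k₁ k₂ f g
    apply Polynomial.funext
    intro x
    simp only [tau, eval_comp, eval_neg, eval_sub, eval_mul, eval_add, eval_X, eval_C,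
      Int.cast_add]
    ring_nf
end

section
/- Let χ be a primitive, nontrivial Dirichlet character modulo N. For every z ∈ ℂ with z^N ≠ 1: ∑_{m=1}^{N} χ(m)·z^m/(z^N − 1) = (g(χ)/N)·∑_{a=1}^{N} χ̄(a)·ζ_N^{a}/(z − ζ_N^{a}). (Since z^N ≠ 1, z ≠ ζ_N^{a} for every a, so all denominators are nonzero.) -/
open Complex Finset

lemma pfc_sum_zmod {N : ℕ} [NeZero N] (f : ZMod N → ℂ) :
    ∑ x : ZMod N, f x = ∑ m ∈ range N, f (m : ZMod N) := by
  refine Finset.sum_nbij' (fun x ↦ x.val) (fun m ↦ (m : ZMod N)) ?_ ?_ ?_ ?_ ?_ <;>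
    simp [ZMod.val_lt, ZMod.natCast_val, ZMod.val_natCast_of_lt, Nat.mod_eq_of_lt]
  exact fun a ha => Nat.mod_eq_of_lt ha

lemma pfc_sum_Icc_eq_sum_range {N : ℕ} (g : ℕ → ℂ) (h : g N = g 0) :
    ∑ m ∈ Icc 1 N, g m = ∑ m ∈ range N, g m := by
  have hr : range (N + 1) = insert 0 (Icc 1 N) := by
    ext x; simp [Nat.lt_succ_iff]; omega
  have h1 : ∑ m ∈ range (N + 1), g m = g 0 + ∑ m ∈ Icc 1 N, g m := by
    rw [hr, Finset.sum_insert (by simp)]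
  have h2 : ∑ m ∈ range (N + 1), g m = ∑ m ∈ range N, g m + g N :=
    Finset.sum_range_succ g N
  rw [h2, h] at h1
  linear_combination -h1

lemma pfc_root_sum {N : ℕ} (hN : 0 < N) {ζ : ℂ} (hζ : IsPrimitiveRoot ζ N) {m k : ℕ}
    (hm : m < N) (hk : k < N) :
    ∑ a ∈ range N, (ζ ^ (m + N - k)) ^ a = if k = m then (N : ℂ) else 0 := by
  rcases eq_or_ne k m with h | h
  · subst h
    simp [show k + N - k = N by omega, hζ.pow_eq_one]
  · rw [if_neg h]
    have hw1 : ζ ^ (m + N - k) ≠ 1 := by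
      intro hw
      obtain ⟨c, hc⟩ := (hζ.pow_eq_one_iff_dvd _).mp hw
      have hc2 : ¬ (2 ≤ c) := by
        intro h2
        have := Nat.mul_le_mul_left N h2
        omega
      interval_cases c <;> omega
    rw [geom_sum_eq hw1]
    have hN1 : (ζ ^ (m + N - k)) ^ N = 1 := by
      rw [← pow_mul, mul_comm, pow_mul, hζ.pow_eq_one, one_pow]
    simp [hN1]

lemma pfc_partial_frac {N : ℕ} (hN : 0 < N) {ζ : ℂ} (hζ : IsPrimitiveRoot ζ N) {z : ℂ}
    (hz : z ^ N ≠ 1) {m : ℕ} (hm : m < N) :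
    z ^ m / (z ^ N - 1) = (1 / N) * ∑ a ∈ range N, ζ ^ (a * (m + 1)) / (z - ζ ^ a) := by
  have hzsub : z ^ N - 1 ≠ 0 := sub_ne_zero.mpr hz
  have hzeta : ∀ a : ℕ, z - ζ ^ a ≠ 0 := by
    intro a
    refine sub_ne_zero.mpr fun h => hz ?_
    rw [h, ← pow_mul, mul_comm, pow_mul, hζ.pow_eq_one, one_pow]
  have hNC : (N : ℂ) ≠ 0 := Nat.cast_ne_zero.mpr hN.ne'
  have hQ : ∀ a : ℕ, (z ^ N - 1) / (z - ζ ^ a) =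
      ∑ k ∈ range N, z ^ k * (ζ ^ a) ^ (N - 1 - k) := by
    intro a
    rw [div_eq_iff (hzeta a)]
    have h1 : (ζ ^ a) ^ N = 1 := by
      rw [← pow_mul, mul_comm, pow_mul, hζ.pow_eq_one, one_pow]
    rw [← h1, ← geom_sum₂_mul]
  have key : ∑ a ∈ range N, ζ ^ (a * (m + 1)) / (z - ζ ^ a) =
      (∑ a ∈ range N, ζ ^ (a * (m + 1)) * ((z ^ N - 1) / (z - ζ ^ a))) / (z ^ N - 1) := by
    rw [Finset.sum_div]
    refine Finset.sum_congr rfl fun a _ => ?_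
    rw [mul_div_assoc', div_div, mul_div_mul_right _ _ hzsub]
  rw [key]
  have key2 : ∑ a ∈ range N, ζ ^ (a * (m + 1)) * ((z ^ N - 1) / (z - ζ ^ a)) =
      N * z ^ m := by
    calc ∑ a ∈ range N, ζ ^ (a * (m + 1)) * ((z ^ N - 1) / (z - ζ ^ a))
        = ∑ a ∈ range N, ∑ k ∈ range N, z ^ k * (ζ ^ (m + N - k)) ^ a := by
          refine Finset.sum_congr rfl fun a _ => ?_
          rw [hQ a, Finset.mul_sum]
          refine Finset.sum_congr rfl fun k hk => ?_
          have hkN : k < N := Finset.mem_range.mp hk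
          rw [mul_left_comm]
          congr 1
          rw [← pow_mul, ← pow_add,
            show a * (m + 1) + a * (N - 1 - k) = (m + N - k) * a by
              rw [← Nat.mul_add, Nat.mul_comm]; congr 1; omega,
            pow_mul]
      _ = ∑ k ∈ range N, z ^ k * ∑ a ∈ range N, (ζ ^ (m + N - k)) ^ a := by
          rw [Finset.sum_comm]
          exact Finset.sum_congr rfl fun k _ => (Finset.mul_sum _ _ _).symm
      _ = N * z ^ m := by
          rw [Finset.sum_congr rfl fun k hk =>
            congrArg (z ^ k * ·) (pfc_root_sum hN hζ hm (Finset.mem_range.mp hk))]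
          simp only [mul_ite, mul_zero]
          rw [Finset.sum_ite_eq' (range N) m (fun k => z ^ k * (N : ℂ))]
          rw [if_pos (Finset.mem_range.mpr hm)]
          ring
  rw [key2]
  field_simp

lemma pfc_gauss_shift {N : ℕ} [NeZero N] {χ : DirichletCharacter ℂ N}
    (hχ : χ.IsPrimitive) (a : ℕ) :
    ∑ m ∈ range N, χ (m : ZMod N) * Complex.exp (2 * Real.pi * I / N) ^ (a * m) =
      (starRingEnd ℂ) (χ (a : ZMod N)) *
        ∑ m ∈ range N, χ (m : ZMod N) * Complex.exp (2 * Real.pi * I / N) ^ m := by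
  set ζ : ℂ := Complex.exp (2 * Real.pi * I / N) with hζdef
  have hstd : ∀ j : ℕ, ZMod.stdAddChar ((j : ZMod N)) = ζ ^ j := by
    intro j
    have h1 : ((j : ℤ) : ZMod N) = (j : ZMod N) := by push_cast; rfl
    rw [← h1, ZMod.stdAddChar_coe, ← Complex.exp_nat_mul]
    congr 1
    push_cast
    ring
  have key := gaussSum_mulShift_of_isPrimitive (ZMod.stdAddChar (N := N)) hχ (a : ZMod N)
  rw [gaussSum, gaussSum, pfc_sum_zmod, pfc_sum_zmod] at key
  have hL : ∑ m ∈ range N, χ (m : ZMod N) * (ZMod.stdAddChar.mulShift (a : ZMod N)) (m : ZMod N)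
      = ∑ m ∈ range N, χ (m : ZMod N) * ζ ^ (a * m) := by
    refine Finset.sum_congr rfl fun m _ => ?_
    rw [AddChar.mulShift_apply, ← Nat.cast_mul, hstd]
  have hR : ∑ m ∈ range N, χ (m : ZMod N) * ZMod.stdAddChar (m : ZMod N)
      = ∑ m ∈ range N, χ (m : ZMod N) * ζ ^ m := by
    refine Finset.sum_congr rfl fun m _ => ?_
    rw [hstd]
  rw [hL, hR] at key
  rw [key, ← MulChar.star_apply']
  rfl

/-- Partial fraction expansion: for a primitive nontrivial Dirichlet character `χ` mod `N`
and `z ∈ ℂ` with `z^N ≠ 1`,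
`∑_{m=1}^{N} χ(m)·z^m/(z^N − 1) = (g(χ)/N)·∑_{a=1}^{N} χ̄(a)·ζ_N^a/(z − ζ_N^a)`. -/
theorem partial_fraction_character (N : ℕ) (hN : 0 < N) (χ : DirichletCharacter ℂ N)
    (hχ : χ.IsPrimitive) (hχ1 : χ ≠ 1) (z : ℂ) (hz : z ^ N ≠ 1) :
    ∑ m ∈ Icc 1 N, χ (m : ZMod N) * z ^ m / (z ^ N - 1) =
      ((∑ a ∈ Icc 1 N, χ (a : ZMod N) *
          Complex.exp (2 * Real.pi * I * (a : ℂ) / (N : ℂ))) / (N : ℂ)) *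
        ∑ a ∈ Icc 1 N, (starRingEnd ℂ) (χ (a : ZMod N)) *
          Complex.exp (2 * Real.pi * I * (a : ℂ) / (N : ℂ)) /
            (z - Complex.exp (2 * Real.pi * I * (a : ℂ) / (N : ℂ))) := by
  haveI : NeZero N := ⟨hN.ne'⟩
  have hN1 : 1 < N := by
    by_contra h
    have hNe : N = 1 := by omega
    subst hNe
    exact hχ1 (Subsingleton.elim χ 1)
  set ζ : ℂ := Complex.exp (2 * Real.pi * I / N) with hζdef
  have hζ : IsPrimitiveRoot ζ N := Complex.isPrimitiveRoot_exp N hN.ne'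
  have hexp : ∀ j : ℕ, Complex.exp (2 * Real.pi * I * (j : ℂ) / N) = ζ ^ j := by
    intro j
    rw [hζdef, ← Complex.exp_nat_mul]
    congr 1
    ring
  have hχ0 : χ (0 : ZMod N) = 0 :=
    χ.map_nonunit (by simpa using ZMod.isUnit_iff_coprime 0 N |>.not.mpr (by simp [Nat.coprime_zero_left, hN1.ne']))
  have hNcast : ((N : ℕ) : ZMod N) = 0 := ZMod.natCast_self N
  have hζN : ζ ^ N = 1 := hζ.pow_eq_one
  simp only [hexp]
  -- convert Icc sums to range sums
  rw [pfc_sum_Icc_eq_sum_range (fun m => χ (m : ZMod N) * z ^ m / (z ^ N - 1))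
      (by simp [hNcast, hχ0]),
    pfc_sum_Icc_eq_sum_range (fun a => χ (a : ZMod N) * ζ ^ a)
      (by simp [hNcast, hζN]),
    pfc_sum_Icc_eq_sum_range (fun a => (starRingEnd ℂ) (χ (a : ZMod N)) * ζ ^ a / (z - ζ ^ a))
      (by simp [hNcast, hζN])]
  set G : ℂ := ∑ m ∈ range N, χ (m : ZMod N) * ζ ^ m with hG
  calc ∑ m ∈ range N, χ (m : ZMod N) * z ^ m / (z ^ N - 1)
      = ∑ m ∈ range N, χ (m : ZMod N) *
          ((1 / N) * ∑ a ∈ range N, ζ ^ (a * (m + 1)) / (z - ζ ^ a)) := by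
        refine Finset.sum_congr rfl fun m hm => ?_
        rw [mul_div_assoc, pfc_partial_frac hN hζ hz (Finset.mem_range.mp hm)]
    _ = (1 / N) * ∑ a ∈ range N, (ζ ^ a / (z - ζ ^ a)) *
          ∑ m ∈ range N, χ (m : ZMod N) * ζ ^ (a * m) := by
        have : ∀ m ∈ range N, χ (m : ZMod N) *
            ((1 / (N:ℂ)) * ∑ a ∈ range N, ζ ^ (a * (m + 1)) / (z - ζ ^ a)) =
            (1 / (N:ℂ)) * ∑ a ∈ range N, (ζ ^ a / (z - ζ ^ a)) * (χ (m : ZMod N) * ζ ^ (a * m)) := by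
          intro m _
          rw [Finset.mul_sum, Finset.mul_sum, Finset.mul_sum]
          refine Finset.sum_congr rfl fun a _ => ?_
          rw [show a * (m + 1) = a * m + a by ring, pow_add]
          ring
        calc ∑ m ∈ range N, χ (m : ZMod N) *
              ((1 / (N:ℂ)) * ∑ a ∈ range N, ζ ^ (a * (m + 1)) / (z - ζ ^ a))
            = ∑ m ∈ range N, (1 / (N:ℂ)) *
                ∑ a ∈ range N, ζ ^ a / (z - ζ ^ a) * (χ (m : ZMod N) * ζ ^ (a * m)) :=
              Finset.sum_congr rfl this
          _ = (1 / (N:ℂ)) * ∑ m ∈ range N,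
                ∑ a ∈ range N, ζ ^ a / (z - ζ ^ a) * (χ (m : ZMod N) * ζ ^ (a * m)) :=
              (Finset.mul_sum _ _ _).symm
          _ = (1 / (N:ℂ)) * ∑ a ∈ range N,
                ∑ m ∈ range N, ζ ^ a / (z - ζ ^ a) * (χ (m : ZMod N) * ζ ^ (a * m)) := by
              rw [Finset.sum_comm]
          _ = (1 / (N:ℂ)) * ∑ a ∈ range N, (ζ ^ a / (z - ζ ^ a)) *
                ∑ m ∈ range N, χ (m : ZMod N) * ζ ^ (a * m) := by
              congr 1
              exact Finset.sum_congr rfl fun a _ => (Finset.mul_sum _ _ _).symm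
    _ = (1 / N) * ∑ a ∈ range N, (ζ ^ a / (z - ζ ^ a)) *
          ((starRingEnd ℂ) (χ (a : ZMod N)) * G) := by
        refine congrArg _ (Finset.sum_congr rfl fun a _ => ?_)
        rw [pfc_gauss_shift hχ a]
    _ = G / N * ∑ a ∈ range N, (starRingEnd ℂ) (χ (a : ZMod N)) * ζ ^ a / (z - ζ ^ a) := by
        rw [Finset.mul_sum, Finset.mul_sum]
        refine Finset.sum_congr rfl fun a _ => ?_
        ring
end

section
/- Let χ be a primitive, nontrivial Dirichlet character modulo N. Then g(χ) ≠ 0, and for every x ∈ ℂ with 0 < |x| < 2π/N one has e^{Nx} ≠ 1 and e^{x − 2πia/N} ≠ 1 for all 1 ≤ a ≤ N, and the identities N·g(χ)^{−1}·∑_{a=1}^{N} χ(a)·e^{ax}/(e^{Nx} − 1) = ∑_{a=1}^{N} χ̄(a)·e^{x − 2πia/N}/(e^{x − 2πia/N} − 1) = ∑_{a=1}^{N} χ̄(a)/(e^{x − 2πia/N} − 1) hold. -/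
/-!
Write `t = eˣ`, `ζ = e^{2πi/N}` and `w_k = t ζ^{-k}`. Since `w_kᴺ = tᴺ`, the finite
geometric series gives `w_k / (w_k - 1) = ∑_{a=1}^N tᵃ ζ^{-ka} / (tᴺ - 1)`. Summing against
`χ̄(k)` turns the inner sum over `k` into the discrete Fourier transform of `χ̄` at `a`, which
for primitive `χ` equals `N χ(a) / g(χ)`: this is Fourier inversion applied to
`𝓕 χ = g(χ) · χ̄(-·)`. The second identity holds because `w / (w - 1) - 1 / (w - 1) = 1` and
`∑ χ̄ = 0` for `χ ≠ 1`. Finally `e^{Nx} ≠ 1` because `Nx` is nonzero of modulus less than `2π`,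
and hence `w_k ≠ 1`.
-/

open Complex Finset

open scoped ZMod

lemma div_sub_one_eq_sum_Icc_pow_div {K : Type*} [Field K] {w : K} {n : ℕ} (hw : w ^ n ≠ 1) :
    w / (w - 1) = (∑ a ∈ Icc 1 n, w ^ a) / (w ^ n - 1) := by
  have hw1 : w ≠ 1 := by rintro rfl; exact hw (one_pow n)
  rw [← Ico_add_one_right_eq_Icc, sum_Ico_eq_sum_range, Nat.add_sub_cancel]
  simp_rw [pow_add, pow_one, mul_comm w, ← sum_mul, geom_sum_eq hw1]
  field_simp [sub_ne_zero.2 hw1, sub_ne_zero.2 hw]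

lemma Complex.two_pi_le_norm_of_exp_eq_one {z : ℂ} (hz : z ≠ 0) (h : exp z = 1) :
    2 * Real.pi ≤ ‖z‖ := by
  obtain ⟨n, rfl⟩ := exp_eq_one_iff.1 h
  have hn : (1 : ℝ) ≤ |(n : ℝ)| := by
    exact_mod_cast Int.one_le_abs (by rintro rfl; simp at hz)
  rw [norm_mul, norm_intCast, norm_mul, norm_mul, norm_ofNat, norm_real, norm_I, mul_one,
    Real.norm_of_nonneg Real.pi_pos.le]
  nlinarith [Real.pi_pos]

lemma Complex.exp_nat_mul_ne_one_of_norm_lt {N : ℕ} {x : ℂ} (hx0 : 0 < ‖x‖)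
    (hxN : ‖x‖ < 2 * Real.pi / N) : exp (N * x) ≠ 1 := by
  have hN : (0 : ℝ) < N := (div_pos_iff_of_pos_left Real.two_pi_pos).1 (hx0.trans hxN)
  intro h
  have h2π := two_pi_le_norm_of_exp_eq_one
    (mul_ne_zero (by exact_mod_cast hN.ne') (norm_pos_iff.1 hx0)) h
  rw [norm_mul, norm_natCast] at h2π
  rw [lt_div_iff₀' hN] at hxN
  linarith

namespace ZMod

variable {N : ℕ} [NeZero N]

lemma sum_range_natCast {M : Type*} [AddCommMonoid M] (f : ZMod N → M) :
    ∑ a ∈ range N, f a = ∑ x, f x :=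
  sum_nbij' (↑) val (fun _ _ => mem_univ _) (fun x _ => mem_range.2 x.val_lt)
    (fun _ ha => val_cast_of_lt (mem_range.1 ha)) (fun x _ => natCast_zmod_val x)
    (fun _ _ => rfl)

lemma sum_Icc_one_natCast {M : Type*} [AddCommMonoid M] (f : ZMod N → M) :
    ∑ a ∈ Icc 1 N, f a = ∑ x, f x := by
  rw [← Ico_add_one_right_eq_Icc, sum_Ico_eq_sum_range, Nat.add_sub_cancel,
    ← Fintype.sum_equiv (Equiv.addLeft (1 : ZMod N)) _ f fun _ => rfl, ← sum_range_natCast]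
  simp

lemma stdAddChar_natCast (a : ℕ) :
    stdAddChar (a : ZMod N) = exp (2 * Real.pi * I * a / N) := by
  simpa using stdAddChar_coe (N := N) a

lemma mul_stdAddChar_pow_self (t : ℂ) (k : ZMod N) : (t * stdAddChar k) ^ N = t ^ N := by
  rw [mul_pow, ← AddChar.map_nsmul_eq_pow, nsmul_eq_mul, natCast_self, zero_mul,
    AddChar.map_zero_eq_one, mul_one]

lemma exp_sub_two_pi_mul_I_div (x : ℂ) (a : ℕ) :
    exp (x - 2 * Real.pi * I * a / N) = exp x * stdAddChar (-(a : ZMod N)) := by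
  rw [exp_sub, AddChar.map_neg_eq_inv, stdAddChar_natCast, div_eq_mul_inv]

end ZMod

namespace DirichletCharacter

open ZMod (stdAddChar sum_Icc_one_natCast mul_stdAddChar_pow_self)

variable {N : ℕ} [NeZero N] {χ : DirichletCharacter ℂ N}

lemma sum_Icc_mul_exp_eq_gaussSum (χ : DirichletCharacter ℂ N) :
    ∑ a ∈ Icc 1 N, χ a * exp (2 * Real.pi * I * a / N) = gaussSum χ stdAddChar := by
  simp_rw [← ZMod.stdAddChar_natCast]
  exact sum_Icc_one_natCast fun a => χ a * stdAddChar a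

lemma IsPrimitive.gaussSum_mul_dft_inv (hχ : χ.IsPrimitive) (a : ZMod N) :
    gaussSum χ stdAddChar * 𝓕 ⇑χ⁻¹ a = N * χ a := by
  have h𝓕 : 𝓕 χ = gaussSum χ stdAddChar • fun k => χ⁻¹ (-k) :=
    funext fun k => by rw [hχ.fourierTransform_eq_inv_mul_gaussSum, mul_comm]; rfl
  have h := congr_fun (ZMod.dft_dft (⇑χ)) (-a)
  rwa [h𝓕, map_smul, ZMod.dft_comp_neg, Pi.smul_apply, neg_neg, smul_eq_mul] at h

lemma IsPrimitive.gaussSum_ne_zero (hχ : χ.IsPrimitive) : gaussSum χ stdAddChar ≠ 0 :=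
  left_ne_zero_of_mul <| by
    rw [hχ.gaussSum_mul_dft_inv 1, map_one, mul_one]
    exact NeZero.ne _

lemma IsPrimitive.gaussSum_mul_sum_div_sub_one (hχ : χ.IsPrimitive) {t : ℂ} (ht : t ^ N ≠ 1) :
    gaussSum χ stdAddChar * ∑ k ∈ Icc 1 N,
        χ⁻¹ k * (t * stdAddChar (-(k : ZMod N))) / (t * stdAddChar (-(k : ZMod N)) - 1) =
      N * ∑ a ∈ Icc 1 N, χ a * t ^ a / (t ^ N - 1) := by
  have hexpand (k : ℕ) :
      χ⁻¹ k * (t * stdAddChar (-(k : ZMod N))) / (t * stdAddChar (-(k : ZMod N)) - 1) =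
        ∑ a ∈ Icc 1 N,
          t ^ a * (stdAddChar (-((k : ZMod N) * (a : ZMod N))) • χ⁻¹ k) / (t ^ N - 1) := by
    have hw := mul_stdAddChar_pow_self t (-(k : ZMod N))
    rw [mul_div_assoc, div_sub_one_eq_sum_Icc_pow_div (hw ▸ ht), hw, mul_div_assoc', mul_sum,
      sum_div]
    refine sum_congr rfl fun a _ => ?_
    rw [mul_pow, ← AddChar.map_nsmul_eq_pow, smul_eq_mul, nsmul_eq_mul, mul_neg,
      mul_comm (a : ZMod N)]
    ring
  calc _
      = ∑ a ∈ Icc 1 N, t ^ a * (gaussSum χ stdAddChar * 𝓕 ⇑χ⁻¹ a) / (t ^ N - 1) := by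
        simp_rw [hexpand, ZMod.dft_apply]
        rw [sum_comm, mul_sum]
        refine sum_congr rfl fun a _ => ?_
        rw [← sum_Icc_one_natCast, ← sum_div, ← mul_sum, mul_div_assoc', mul_left_comm]
    _ = N * ∑ a ∈ Icc 1 N, χ a * t ^ a / (t ^ N - 1) := by
        simp_rw [hχ.gaussSum_mul_dft_inv, mul_sum]
        exact sum_congr rfl fun a _ => by ring

lemma sum_Icc_mul_div_sub_one (hχ : χ ≠ 1) {w : ℕ → ℂ}
    (hw : ∀ a ∈ Icc 1 N, w a ≠ 1) :
    ∑ a ∈ Icc 1 N, χ a * w a / (w a - 1) = ∑ a ∈ Icc 1 N, χ a / (w a - 1) := by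
  have hsum : ∑ a ∈ Icc 1 N, χ a = 0 := by
    rw [sum_Icc_one_natCast (⇑χ)]
    exact MulChar.sum_eq_zero_of_ne_one hχ
  rw [← sub_eq_zero, ← sum_sub_distrib, ← hsum]
  refine sum_congr rfl fun a ha => ?_
  field_simp [sub_ne_zero.2 (hw a ha)]

end DirichletCharacter

/-- For a primitive nontrivial Dirichlet character `χ` mod `N`: the Gauss sum
`g(χ) = ∑_{a=1}^N χ(a)·e^{2πia/N}` is nonzero, and for every `x ∈ ℂ` with
`0 < |x| < 2π/N` one has `e^{Nx} ≠ 1`, `e^{x−2πia/N} ≠ 1` for `1 ≤ a ≤ N`, and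
`N·g(χ)⁻¹·∑_{a=1}^N χ(a)·e^{ax}/(e^{Nx}−1)
  = ∑_{a=1}^N χ̄(a)·e^{x−2πia/N}/(e^{x−2πia/N}−1)
  = ∑_{a=1}^N χ̄(a)/(e^{x−2πia/N}−1)`. -/
theorem gauss_sum_partial_fraction (N : ℕ) (hN : 0 < N) (χ : DirichletCharacter ℂ N)
    (hχ : χ.IsPrimitive) (hχ1 : χ ≠ 1) :
    (∑ a ∈ Icc 1 N, χ (a : ZMod N) *
        Complex.exp (2 * Real.pi * I * (a : ℂ) / (N : ℂ)) ≠ 0) ∧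
    ∀ x : ℂ, 0 < ‖x‖ → ‖x‖ < 2 * Real.pi / (N : ℝ) →
      Complex.exp ((N : ℂ) * x) ≠ 1 ∧
      (∀ a ∈ Icc 1 N,
        Complex.exp (x - 2 * Real.pi * I * (a : ℂ) / (N : ℂ)) ≠ 1) ∧
      (N : ℂ) * (∑ a ∈ Icc 1 N, χ (a : ZMod N) *
            Complex.exp (2 * Real.pi * I * (a : ℂ) / (N : ℂ)))⁻¹ *
          ∑ a ∈ Icc 1 N, χ (a : ZMod N) * Complex.exp ((a : ℂ) * x) /
            (Complex.exp ((N : ℂ) * x) - 1) =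
        ∑ a ∈ Icc 1 N, (starRingEnd ℂ) (χ (a : ZMod N)) *
          Complex.exp (x - 2 * Real.pi * I * (a : ℂ) / (N : ℂ)) /
            (Complex.exp (x - 2 * Real.pi * I * (a : ℂ) / (N : ℂ)) - 1) ∧
      (∑ a ∈ Icc 1 N, (starRingEnd ℂ) (χ (a : ZMod N)) *
          Complex.exp (x - 2 * Real.pi * I * (a : ℂ) / (N : ℂ)) /
            (Complex.exp (x - 2 * Real.pi * I * (a : ℂ) / (N : ℂ)) - 1)) =
        ∑ a ∈ Icc 1 N, (starRingEnd ℂ) (χ (a : ZMod N)) /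
          (Complex.exp (x - 2 * Real.pi * I * (a : ℂ) / (N : ℂ)) - 1) := by
  have : NeZero N := ⟨hN.ne'⟩
  have hconj (a : ZMod N) : starRingEnd ℂ (χ a) = χ⁻¹ a := MulChar.star_apply' χ a
  simp only [DirichletCharacter.sum_Icc_mul_exp_eq_gaussSum, hconj,
    ZMod.exp_sub_two_pi_mul_I_div, exp_nat_mul]
  refine ⟨hχ.gaussSum_ne_zero, fun x hx0 hxN => ?_⟩
  have ht : exp x ^ N ≠ 1 := exp_nat_mul x N ▸ exp_nat_mul_ne_one_of_norm_lt hx0 hxN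
  have hw : ∀ a ∈ Icc 1 N, exp x * ZMod.stdAddChar (-(a : ZMod N)) ≠ 1 := fun a _ h =>
    ht <| by rw [← ZMod.mul_stdAddChar_pow_self _ (-(a : ZMod N)), h, one_pow]
  refine ⟨ht, hw, ?_, DirichletCharacter.sum_Icc_mul_div_sub_one (inv_ne_one.2 hχ1) hw⟩
  rw [mul_comm (N : ℂ), mul_assoc, ← hχ.gaussSum_mul_sum_div_sub_one ht,
    inv_mul_cancel_left₀ hχ.gaussSum_ne_zero]
end

section
/- For every y ∈ ℂ with 0 < |y| < 2π: e^{y/2}/(e^y − 1) = 1/y − ∑_{n=1}^{∞} ζ(1−n, 1/2)·y^{n−1}/(n−1)!, where the series converges absolutely. (Thus e^{x/2}/(e^x − 1) is, up to the indicated normalization, the generating function of the values ζ(1−n, 1/2), n ∈ ℕ, of the Hurwitz zeta function at nonpositive integers.) -/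
/-!
By `hurwitzZeta_neg_nat`, `ζ(-m, 1/2) = -B_{m+1}(1/2)/(m+1)`, so up to the factor `-1/y` and the
term `n = 0` the series is the Bernoulli generating series `∑ Bₙ(1/2) yⁿ/n!`. Formally
`(∑ Bₙ(x) yⁿ/n!) (e^y - 1) = y e^{xy}` (`Polynomial.bernoulli_generating_function`). The Fourier
expansion of the Bernoulli polynomials gives `|Bₙ(x)| ≤ 2 ζ(2) n!/(2π)ⁿ` on `[0, 1]`, so for
`|y| < 2π` both factors converge absolutely and the formal identity holds numerically through the
Cauchy product.
-/

open HurwitzZeta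
open Real Finset
open scoped Nat

theorem abs_bernoulliFun_le {k : ℕ} (hk : 2 ≤ k) {x : ℝ} (hx : x ∈ Set.Icc (0 : ℝ) 1) :
    |bernoulliFun k x| ≤ π ^ 2 / 3 * k ! / (2 * π) ^ k := by
  have hterm : ∀ n : ℕ, ‖(1 : ℂ) / (n : ℂ) ^ k *
      (fourier n (x : UnitAddCircle) + (-1 : ℂ) ^ k * fourier (-n) (x : UnitAddCircle))‖ ≤
        2 * (1 / (n : ℝ) ^ 2) := by
    intro n
    rcases Nat.eq_zero_or_pos n with rfl | hn
    · simp [zero_pow (by omega : k ≠ 0)]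
    have hfourier : ‖fourier n (x : UnitAddCircle) +
        (-1 : ℂ) ^ k * fourier (-n) (x : UnitAddCircle)‖ ≤ 2 := by
      refine (norm_add_le _ _).trans ?_
      rw [norm_mul, norm_pow, norm_neg, norm_one, one_pow, one_mul, fourier_apply,
        fourier_apply, Circle.norm_coe, Circle.norm_coe]
      norm_num
    rw [norm_mul, mul_comm]
    gcongr
    simp only [one_div, norm_inv, norm_pow, Complex.norm_natCast]
    gcongr
    exact_mod_cast hn
  have h := (hasSum_one_div_nat_pow_mul_fourier hk hx).norm_le_of_bounded
    (hasSum_zeta_two.mul_left 2) hterm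
  simp only [norm_mul, norm_div, norm_neg, norm_pow, Complex.norm_natCast, Complex.norm_real,
    Complex.norm_I, Complex.norm_ofNat, Real.norm_eq_abs, abs_of_pos pi_pos, mul_one] at h
  rw [le_div_iff₀ (by positivity)]
  field_simp at h
  linarith

theorem aeval_ofReal_bernoulli (k : ℕ) (x : ℝ) :
    Polynomial.aeval (x : ℂ) (Polynomial.bernoulli k) = bernoulliFun k x := by
  rw [bernoulliFun, Polynomial.eval_map, ← Polynomial.aeval_def]
  exact Polynomial.aeval_algebraMap_apply ℂ x _

namespace PowerSeries

theorem hasSum_coeff_mul_mul_pow {R : Type*} [NormedCommRing R] [CompleteSpace R]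
    {f g : PowerSeries R} {y : R} (hf : Summable fun n => ‖coeff n f * y ^ n‖)
    (hg : Summable fun n => ‖coeff n g * y ^ n‖) :
    HasSum (fun n => coeff n (f * g) * y ^ n)
      ((∑' n, coeff n f * y ^ n) * ∑' n, coeff n g * y ^ n) := by
  rw [tsum_mul_tsum_eq_tsum_sum_antidiagonal_of_summable_norm hf hg]
  refine (summable_norm_sum_mul_antidiagonal_of_summable_norm hf hg).of_norm.hasSum.congr_fun
    fun n => ?_
  rw [coeff_mul, Finset.sum_mul]
  refine Finset.sum_congr rfl fun p hp => ?_
  rw [← mem_antidiagonal.mp hp, pow_add]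
  ring

theorem hasSum_coeff_exp_mul_pow (y : ℂ) :
    HasSum (fun n => coeff n (exp ℂ) * y ^ n) (Complex.exp y) := by
  rw [Complex.exp_eq_exp_ℂ]
  refine (NormedSpace.expSeries_div_hasSum_exp y).congr_fun fun n => ?_
  simp [coeff_exp, div_eq_inv_mul]

theorem summable_norm_coeff_exp_mul_pow (y : ℂ) :
    Summable fun n => ‖coeff n (exp ℂ) * y ^ n‖ := by
  convert Real.summable_pow_div_factorial ‖y‖ using 2 with n
  simp [coeff_exp, div_eq_inv_mul]

theorem hasSum_coeff_X_mul_rescale_exp_mul_pow (c y : ℂ) :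
    HasSum (fun n => coeff n (X * rescale c (exp ℂ)) * y ^ n) (y * Complex.exp (c * y)) := by
  rw [← hasSum_nat_add_iff' 1, sum_range_one, coeff_zero_X_mul, zero_mul, sub_zero]
  refine ((hasSum_coeff_exp_mul_pow (c * y)).mul_left y).congr_fun fun n => ?_
  simp only [coeff_succ_X_mul, coeff_rescale, coeff_exp, one_div, map_inv₀, map_natCast]
  ring

end PowerSeries

theorem summable_norm_bernoulliFun_mul_pow_div_factorial {x : ℝ} (hx : x ∈ Set.Icc (0 : ℝ) 1)
    {y : ℂ} (hy : ‖y‖ < 2 * π) :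
    Summable fun n => ‖(bernoulliFun n x : ℂ) * y ^ n / (n ! : ℂ)‖ := by
  have hq : 0 ≤ ‖y‖ / (2 * π) := by positivity
  refine Summable.of_norm_bounded_eventually_nat
    ((summable_geometric_of_lt_one hq ((div_lt_one (by positivity)).mpr hy)).mul_left (π ^ 2 / 3)) ?_
  filter_upwards [Filter.eventually_ge_atTop 2] with n hn
  rw [norm_norm, norm_div, norm_mul, Complex.norm_real, Real.norm_eq_abs, norm_pow,
    Complex.norm_natCast, div_pow]
  calc |bernoulliFun n x| * ‖y‖ ^ n / n ! ≤ π ^ 2 / 3 * n ! / (2 * π) ^ n * ‖y‖ ^ n / n ! := by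
        gcongr; exact abs_bernoulliFun_le hn hx
    _ = π ^ 2 / 3 * (‖y‖ ^ n / (2 * π) ^ n) := by field_simp

open PowerSeries in
theorem tsum_bernoulliFun_mul_pow_div_factorial_mul_exp_sub_one {x : ℝ}
    (hx : x ∈ Set.Icc (0 : ℝ) 1) {y : ℂ} (hy : ‖y‖ < 2 * π) :
    (∑' n, (bernoulliFun n x : ℂ) * y ^ n / n !) * (Complex.exp y - 1) =
      y * Complex.exp (x * y) := by
  set B : PowerSeries ℂ :=
    mk fun n => Polynomial.aeval (x : ℂ) ((1 / n ! : ℚ) • Polynomial.bernoulli n)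
  have hB : ∀ n, coeff n B * y ^ n = (bernoulliFun n x : ℂ) * y ^ n / n ! := by
    intro n
    simp only [B, coeff_mk, map_smul, aeval_ofReal_bernoulli, Rat.smul_def]
    push_cast
    ring
  have hBsum : Summable fun n => ‖coeff n B * y ^ n‖ := by
    simpa only [hB] using summable_norm_bernoulliFun_mul_pow_div_factorial hx hy
  have hgen : B * exp ℂ = X * rescale (x : ℂ) (exp ℂ) + B := by
    rw [← Polynomial.bernoulli_generating_function, mul_sub, mul_one, sub_add_cancel]
  have hprod := hasSum_coeff_mul_mul_pow hBsum (summable_norm_coeff_exp_mul_pow y)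
  rw [hgen, (hasSum_coeff_exp_mul_pow y).tsum_eq] at hprod
  have hsum := (hasSum_coeff_X_mul_rescale_exp_mul_pow (x : ℂ) y).add hBsum.of_norm.hasSum
  simp only [← add_mul, ← map_add] at hsum
  simp only [hB] at hprod hsum
  linear_combination hprod.unique hsum

theorem hurwitzZetaOdd_half (s : ℂ) : hurwitzZetaOdd ((1 / 2 : ℝ) : UnitAddCircle) s = 0 := by
  have hhalf : -((1 / 2 : ℝ) : UnitAddCircle) = ((1 / 2 : ℝ) : UnitAddCircle) := by
    rw [← AddCircle.coe_neg, show -(1 / 2 : ℝ) = 1 / 2 - 1 by norm_num, AddCircle.coe_sub,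
      AddCircle.coe_period, sub_zero]
  have h := hurwitzZetaOdd_neg ((1 / 2 : ℝ) : UnitAddCircle) s
  rw [hhalf] at h
  linear_combination h / 2

theorem hurwitzZeta_half_neg_nat (m : ℕ) :
    hurwitzZeta ((1 / 2 : ℝ) : UnitAddCircle) (-m) =
      -bernoulliFun (m + 1) (1 / 2) / (m + 1) := by
  rcases eq_or_ne m 0 with rfl | hm
  · have hne : ((1 / 2 : ℝ) : UnitAddCircle) ≠ 0 := by
      rw [Ne, AddCircle.coe_eq_zero_iff_of_mem_Ico (by norm_num)]
      norm_num
    rw [Nat.cast_zero, neg_zero, hurwitzZeta, hurwitzZetaEven_apply_zero, if_neg hne,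
      hurwitzZetaOdd_half]
    norm_num
  · rw [hurwitzZeta_neg_nat hm (by norm_num), Polynomial.eval_map, ← Polynomial.aeval_def,
      aeval_ofReal_bernoulli]
    ring

theorem Complex.exp_ne_one_of_ne_zero_of_norm_lt {y : ℂ} (hy0 : y ≠ 0) (hy : ‖y‖ < 2 * π) :
    Complex.exp y ≠ 1 := by
  rw [Ne, Complex.exp_eq_one_iff]
  rintro ⟨n, rfl⟩
  have hn : n ≠ 0 := by rintro rfl; simp at hy0
  have : (1 : ℝ) ≤ |(n : ℝ)| := by exact_mod_cast Int.one_le_abs hn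
  simp only [Complex.norm_mul, norm_intCast, norm_ofNat, norm_real, norm_eq_abs,
    abs_of_pos pi_pos, norm_I, mul_one] at hy
  nlinarith [pi_pos]

theorem hasSum_bernoulliFun_mul_pow_div_factorial {x : ℝ} (hx : x ∈ Set.Icc (0 : ℝ) 1) {y : ℂ}
    (hy0 : y ≠ 0) (hy : ‖y‖ < 2 * π) :
    HasSum (fun n => (bernoulliFun n x : ℂ) * y ^ n / (n ! : ℂ))
      (y * Complex.exp (x * y) / (Complex.exp y - 1)) := by
  have hexp : Complex.exp y - 1 ≠ 0 := sub_ne_zero.mpr (Complex.exp_ne_one_of_ne_zero_of_norm_lt hy0 hy)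
  rw [← eq_div_of_mul_eq hexp (tsum_bernoulliFun_mul_pow_div_factorial_mul_exp_sub_one hx hy)]
  exact (summable_norm_bernoulliFun_mul_pow_div_factorial hx hy).of_norm.hasSum

/-- For `0 < |y| < 2π`, `e^{y/2}/(e^y − 1) = 1/y − ∑_{n≥1} ζ(1−n,1/2)·y^{n−1}/(n−1)!`
(written below with `n = m + 1`, so the sum is `∑_{m≥0} ζ(−m,1/2)·y^m/m!`), and the series
converges absolutely.  Thus `e^{x/2}/(e^x−1)` is a generating function for the values of the
Hurwitz zeta function `ζ(s,1/2)` at nonpositive integers. -/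
theorem hurwitzZeta_half_generating_function (y : ℂ)
    (hy0 : 0 < ‖y‖) (hy : ‖y‖ < 2 * Real.pi) :
    Summable (fun m : ℕ =>
      ‖hurwitzZeta ((1 / 2 : ℝ) : UnitAddCircle) (-(m : ℂ)) * y ^ m / (m.factorial : ℂ)‖) ∧
    Complex.exp (y / 2) / (Complex.exp y - 1) =
      1 / y - ∑' m : ℕ,
        hurwitzZeta ((1 / 2 : ℝ) : UnitAddCircle) (-(m : ℂ)) * y ^ m / (m.factorial : ℂ) := by
  have hy_ne : y ≠ 0 := norm_pos_iff.mp hy0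
  set b : ℕ → ℂ := fun n => (bernoulliFun n (1 / 2) : ℂ) * y ^ n / (n ! : ℂ)
  have hzeta (m : ℕ) :
      hurwitzZeta ((1 / 2 : ℝ) : UnitAddCircle) (-(m : ℂ)) * y ^ m / m ! = -b (m + 1) / y := by
    simp only [b, hurwitzZeta_half_neg_nat, Nat.factorial_succ]
    push_cast
    field_simp
    ring
  have hb : HasSum b (y * Complex.exp (y / 2) / (Complex.exp y - 1)) := by
    have h := hasSum_bernoulliFun_mul_pow_div_factorial (x := 1 / 2) (by norm_num) hy_ne hy
    rwa [Complex.ofReal_div, Complex.ofReal_one, one_div_mul_eq_div] at h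
  have hb0 : b 0 = 1 := by simp [b]
  have hb_succ := (hasSum_nat_add_iff' 1).mpr hb
  rw [sum_range_one, hb0] at hb_succ
  refine ⟨?_, ?_⟩
  · have hb_norm : Summable fun n => ‖b n‖ :=
      summable_norm_bernoulliFun_mul_pow_div_factorial (by norm_num) hy
    simpa only [hzeta, norm_div, norm_neg] using
      ((summable_nat_add_iff 1).mpr hb_norm).div_const ‖y‖
  · rw [((hb_succ.neg.div_const y).congr_fun hzeta).tsum_eq]
    field_simp
    ring
end

section
/- Let V be a vector space over ℂ equipped with subspaces (V_n)_{n ∈ ℕ} forming an internal direct sum decomposition of V with each V_n finite-dimensional. Let T : V → V be an injective ℂ-linear map satisfying T(V_n) ⊆ V_{n+1} for every n. Let U' ⊆ V be a graded subspace (that is, U' is the sum of its components U' ∩ V_n) and suppose the family of subspaces (T^i(U'))_{i ∈ ℕ} is independent, i.e. their sum is an internal direct sum. If U'' ⊆ U' is a graded subspace such that ∑_{i ∈ ℕ} T^i(U'') = ∑_{i ∈ ℕ} T^i(U'), then U'' = U'. -/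
section aux
variable {V : Type*} [AddCommGroup V] [Module ℂ V] (Vgr : ℕ → Submodule ℂ V)
  (hdec : DirectSum.IsInternal Vgr)

noncomputable def projGr (n : ℕ) : V →ₗ[ℂ] V :=
  (Vgr n).subtype ∘ₗ (DirectSum.component ℂ ℕ (fun n => ↥(Vgr n)) n) ∘ₗ
    (LinearEquiv.ofBijective (DirectSum.coeLinearMap Vgr) hdec).symm.toLinearMap

theorem projGr_mem (n : ℕ) (v : V) : projGr Vgr hdec n v ∈ Vgr n :=
  Submodule.coe_mem _

theorem projGr_apply (m n : ℕ) (v : V) (hv : v ∈ Vgr m) :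
    projGr Vgr hdec n v = if m = n then v else 0 := by
  unfold projGr
  simp only [LinearMap.comp_apply, LinearEquiv.coe_coe, DirectSum.component,
    DFinsupp.lapply_apply, Submodule.subtype_apply]
  by_cases h : m = n
  · subst h
    erw [hdec.ofBijective_coeLinearMap_of_mem hv]
    simp
  · erw [hdec.ofBijective_coeLinearMap_of_mem_ne h hv]
    simp [h]

variable (T : V →ₗ[ℂ] V) (hTdeg : ∀ n, (Vgr n).map T ≤ Vgr (n + 1))

include hTdeg in
theorem pow_deg (i m : ℕ) : (Vgr m).map (T ^ i) ≤ Vgr (m + i) := by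
  induction i with
  | zero => simp [Module.End.one_eq_id]
  | succ i ih =>
      intro x hx
      obtain ⟨y, hy, rfl⟩ := hx
      have : (T ^ (i + 1)) y = T ((T ^ i) y) := by
        rw [pow_succ']; rfl
      rw [this, ← Nat.add_assoc]
      exact hTdeg _ ⟨(T ^ i) y, ih ⟨y, hy, rfl⟩, rfl⟩

include hTdeg in
theorem projGr_pow_comm (i n : ℕ) (hin : i ≤ n) (v : V) :
    projGr Vgr hdec n ((T ^ i) v) = (T ^ i) (projGr Vgr hdec (n - i) v) := by
  have hv : v ∈ (⊤ : Submodule ℂ V) := trivial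
  rw [← hdec.submodule_iSup_eq_top] at hv
  induction hv using Submodule.iSup_induction' with
  | mem m w hw =>
      have h1 : (T ^ i) w ∈ Vgr (m + i) := pow_deg Vgr T hTdeg i m ⟨w, hw, rfl⟩
      rw [projGr_apply Vgr hdec (m + i) n _ h1, projGr_apply Vgr hdec m (n - i) w hw]
      by_cases h : m + i = n
      · have : m = n - i := by omega
        have h2 : n - i + i = n := by omega
        simp [h, this, h2]
      · have : ¬ m = n - i := by omega
        simp [h, this]
  | zero => simp
  | add x _ y _ hx hy => simp [map_add, hx, hy]

include hTdeg in
theorem projGr_pow_zero (i n : ℕ) (hin : n < i) (v : V) :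
    projGr Vgr hdec n ((T ^ i) v) = 0 := by
  have hv : v ∈ (⊤ : Submodule ℂ V) := trivial
  rw [← hdec.submodule_iSup_eq_top] at hv
  induction hv using Submodule.iSup_induction' with
  | mem m w hw =>
      have h1 : (T ^ i) w ∈ Vgr (m + i) := pow_deg Vgr T hTdeg i m ⟨w, hw, rfl⟩
      rw [projGr_apply Vgr hdec (m + i) n _ h1]
      have : ¬ m + i = n := by omega
      simp [this]
  | zero => simp
  | add x _ y _ hx hy => simp [map_add, hx, hy]

theorem projGr_graded (U : Submodule ℂ V) (hU : U = ⨆ n, U ⊓ Vgr n) (n : ℕ)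
    {u : V} (hu : u ∈ U) : projGr Vgr hdec n u ∈ U := by
  rw [hU] at hu
  induction hu using Submodule.iSup_induction' with
  | mem m w hw =>
      rw [projGr_apply Vgr hdec m n w hw.2]
      split
      · exact hU ▸ Submodule.mem_iSup_of_mem m hw
      · exact Submodule.zero_mem _
  | zero => simp
  | add x _ y _ hx hy => simp only [map_add]; exact Submodule.add_mem _ hx hy

end aux


/-- Minimality of field subspaces: let `V = ⊕ₙ Vₙ` be an internal direct sum of
finite-dimensional subspaces, `T` an injective linear map raising degree by one, and `U'` a
graded subspace with `(Tⁱ U')_{i ∈ ℕ}` independent.  If `U'' ⊆ U'` is a graded subspace with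
`∑ᵢ Tⁱ U'' = ∑ᵢ Tⁱ U'`, then `U'' = U'`. -/
theorem graded_field_subspace_minimal {V : Type*} [AddCommGroup V] [Module ℂ V]
    (Vgr : ℕ → Submodule ℂ V)
    (hdec : DirectSum.IsInternal Vgr)
    (hfd : ∀ n, FiniteDimensional ℂ (Vgr n))
    (T : V →ₗ[ℂ] V) (hTinj : Function.Injective T)
    (hTdeg : ∀ n, (Vgr n).map T ≤ Vgr (n + 1))
    (U' : Submodule ℂ V) (hU'gr : U' = ⨆ n, U' ⊓ Vgr n)
    (hindep : iSupIndep fun i : ℕ => U'.map (T ^ i))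
    (U'' : Submodule ℂ V) (hle : U'' ≤ U') (hU''gr : U'' = ⨆ n, U'' ⊓ Vgr n)
    (hsum : (⨆ i : ℕ, U''.map (T ^ i)) = ⨆ i : ℕ, U'.map (T ^ i)) :
    U'' = U' := by
  refine le_antisymm hle ?_
  conv_lhs => rw [hU'gr]
  refine iSup_le fun n => fun x hx => ?_
  obtain ⟨hxU, hxV⟩ := hx
  -- x lies in the sum of the T^i U''
  have hx2 : x ∈ ⨆ i : ℕ, U''.map (T ^ i) := by
    rw [hsum]
    exact Submodule.mem_iSup_of_mem 0 (by simpa [Module.End.one_eq_id, Submodule.map_id] using hxU)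
  -- project to degree n
  have hπx : projGr Vgr hdec n x = x := by
    rw [projGr_apply Vgr hdec n n x hxV]; simp
  set W'' : Submodule ℂ V := ⨆ i : ℕ, U''.map (T ^ (i + 1)) with hW''
  have hmap : (⨆ i : ℕ, U''.map (T ^ i)).map (projGr Vgr hdec n) ≤ U'' ⊔ W'' := by
    rw [Submodule.map_iSup]
    refine iSup_le fun i => ?_
    rintro _ ⟨_, ⟨u, hu, rfl⟩, rfl⟩
    match i with
    | 0 =>
        refine Submodule.mem_sup_left ?_
        simpa [Module.End.one_eq_id] using projGr_graded Vgr hdec U'' hU''gr n hu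
    | i + 1 =>
        by_cases hin : i + 1 ≤ n
        · rw [projGr_pow_comm Vgr hdec T hTdeg (i + 1) n hin u]
          refine Submodule.mem_sup_right (Submodule.mem_iSup_of_mem i ?_)
          exact ⟨projGr Vgr hdec (n - (i + 1)) u,
            projGr_graded Vgr hdec U'' hU''gr _ hu, rfl⟩
        · rw [projGr_pow_zero Vgr hdec T hTdeg (i + 1) n (by omega) u]
          exact Submodule.zero_mem _
  have hx3 : x ∈ U'' ⊔ W'' := hπx ▸ hmap (Submodule.mem_map_of_mem hx2)
  obtain ⟨u, hu, w, hw, hxw⟩ := Submodule.mem_sup.mp hx3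
  -- disjointness from independence at index 0
  have hdisj : Disjoint U' (⨆ i : ℕ, U'.map (T ^ (i + 1))) := by
    have h0 := hindep 0
    simp only [] at h0
    rw [pow_zero, Module.End.one_eq_id, Submodule.map_id] at h0
    refine h0.mono_right ?_
    refine iSup_le fun i => ?_
    exact le_iSup₂_of_le (i + 1) (by omega) le_rfl
  have hwU' : w ∈ U' := by
    have : w = x - u := by rw [← hxw]; abel
    rw [this]
    exact Submodule.sub_mem _ hxU (hle hu)
  have hwW : w ∈ ⨆ i : ℕ, U'.map (T ^ (i + 1)) := by
    refine (iSup_mono fun i => Submodule.map_mono hle (f := T ^ (i + 1))) hw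
  have : w = 0 := by
    have := hdisj.le_bot ⟨hwU', hwW⟩
    simpa using this
  rw [← hxw, this, add_zero]
  exact hu
end

section
/- On pairs (k,f) ∈ ℤ × ℂ[X] (representing the differential operator t^k f(D)), define the bracket [(k₁,f),(k₂,g)] = (k₁+k₂, f(X+k₂)·g(X) − g(X+k₁)·f(X)), and define Ψ : (ℤ × ℂ[X]) × (ℤ × ℂ[X]) → ℂ by: Ψ((k,f),(m,g)) = 0 if k + m ≠ 0; Ψ((k,f),(−k,g)) = ∑_{i=1}^{k} f(−i)·g(k−i) if k ≥ 0 (an empty sum for k = 0); and Ψ((k,f),(−k,g)) = −∑_{i=1}^{−k} g(−i)·f(−k−i) if k < 0. Then Ψ is bilinear in the polynomial arguments, alternating, and satisfies the 2-cocycle identity: for all (k₁,f), (k₂,g), (k₃,h) ∈ ℤ × ℂ[X], Ψ([(k₁,f),(k₂,g)], (k₃,h)) + Ψ([(k₂,g),(k₃,h)], (k₁,f)) + Ψ([(k₃,h),(k₁,f)], (k₂,g)) = 0. -/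
open Polynomial Finset

/-- The bracket on pairs `(k, f) ∈ ℤ × ℂ[X]` induced by the commutator of the differential
operators `t^{k₁}f(D)` and `t^{k₂}g(D)` on `ℂ[t,t⁻¹]`. -/
noncomputable def dBracket (x y : ℤ × Polynomial ℂ) : ℤ × Polynomial ℂ :=
  (x.1 + y.1,
    x.2.comp (X + C ((y.1 : ℤ) : ℂ)) * y.2 - y.2.comp (X + C ((x.1 : ℤ) : ℂ)) * x.2)

/-- The Kac–Peterson 2-cocycle on `ℤ × ℂ[X]`. -/
noncomputable def Psi (x y : ℤ × Polynomial ℂ) : ℂ :=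
  if x.1 + y.1 ≠ 0 then 0
  else if 0 ≤ x.1 then
    ∑ i ∈ Icc 1 x.1.toNat, x.2.eval (-(i : ℂ)) * y.2.eval ((x.1 : ℂ) - (i : ℂ))
  else
    -∑ i ∈ Icc 1 (-x.1).toNat, y.2.eval (-(i : ℂ)) * x.2.eval (-(x.1 : ℂ) - (i : ℂ))

/-!
In terms of the values `A j = f(j)`, `B j = g(j)` at integers, `Ψ((k, f), (-k, g))` is the
oriented sum of `j ↦ A j * B (j + k)` from `-k` to `0`: the sum over `-k ≤ j < 0` if `k ≥ 0`,
and minus the sum over `0 ≤ j < -k` if `k < 0`.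

For `k₁ + k₂ + k₃ = 0`, shifting the summation index splits each of the three cocycle terms into
oriented sums of the two triple products `P j = A j * B (j + k₁) * C (j + k₁ + k₂)` and
`Q j = A j * B (j - k₂) * C (j + k₁)`. The three sums of `Q` run around the triangle
`-k₁ → k₂ → 0 → -k₁` and those of `P` around `-(k₁ + k₂) → 0 → -k₁ → -(k₁ + k₂)`, so both
vanish by Chasles' relation for oriented sums.
-/

noncomputable def orientedSum {M : Type*} [AddCommGroup M] (φ : ℤ → M) (a b : ℤ) : M :=
  ∑ j ∈ Ico a b, φ j - ∑ j ∈ Ico b a, φ j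

section OrientedSum

variable {M : Type*} [AddCommGroup M] (φ ψ : ℤ → M)

theorem orientedSum_swap (a b : ℤ) : orientedSum φ b a = -orientedSum φ a b := by
  simp only [orientedSum, neg_sub]

theorem orientedSum_self (a : ℤ) : orientedSum φ a a = 0 := by
  simp [orientedSum]

theorem orientedSum_of_le {a b : ℤ} (h : a ≤ b) : orientedSum φ a b = ∑ j ∈ Ico a b, φ j := by
  simp [orientedSum, Ico_eq_empty_of_le h]

theorem orientedSum_add_adjacent_of_le {a b c : ℤ} (hab : a ≤ b) (hbc : b ≤ c) :
    orientedSum φ a b + orientedSum φ b c = orientedSum φ a c := by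
  rw [orientedSum_of_le φ hab, orientedSum_of_le φ hbc, orientedSum_of_le φ (hab.trans hbc),
    ← Ico_union_Ico_eq_Ico hab hbc, sum_union (Ico_disjoint_Ico_consecutive a b c)]

theorem orientedSum_add_adjacent (a b c : ℤ) :
    orientedSum φ a b + orientedSum φ b c = orientedSum φ a c := by
  have := orientedSum_swap φ a b
  have := orientedSum_swap φ b c
  have := orientedSum_swap φ a c
  rcases le_total a b with hab | hab <;> rcases le_total b c with hbc | hbc <;>
    rcases le_total a c with hac | hac <;> grind [orientedSum_add_adjacent_of_le]

theorem orientedSum_cycle (a b c : ℤ) :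
    orientedSum φ a b + orientedSum φ b c + orientedSum φ c a = 0 := by
  rw [orientedSum_add_adjacent, orientedSum_add_adjacent, orientedSum_self]

theorem orientedSum_comp_add_right (a b c : ℤ) :
    orientedSum (fun j => φ (j + c)) a b = orientedSum φ (a + c) (b + c) := by
  simp only [orientedSum, sum_Ico_add']

theorem orientedSum_add (a b : ℤ) :
    orientedSum (fun j => φ j + ψ j) a b = orientedSum φ a b + orientedSum ψ a b := by
  simp only [orientedSum, sum_add_distrib]
  abel

theorem orientedSum_sub (a b : ℤ) :
    orientedSum (fun j => φ j - ψ j) a b = orientedSum φ a b - orientedSum ψ a b := by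
  simp only [orientedSum, sum_sub_distrib]
  abel

end OrientedSum

theorem orientedSum_mul_left {R : Type*} [NonUnitalNonAssocRing R] (c : R) (φ : ℤ → R)
    (a b : ℤ) : orientedSum (fun j => c * φ j) a b = c * orientedSum φ a b := by
  simp only [orientedSum, ← mul_sum, mul_sub]

theorem Finset.sum_Icc_one_neg {M : Type*} [AddCommMonoid M] (φ : ℤ → M) (n : ℕ) :
    ∑ i ∈ Icc 1 n, φ (-i) = ∑ j ∈ Ico (-(n : ℤ)) 0, φ j := by
  refine sum_nbij' (fun i => -(i : ℤ)) (fun j => (-j).toNat) ?_ ?_ ?_ ?_ (fun _ _ => rfl) <;>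
    intro i hi <;> simp only [mem_Icc, mem_Ico] at * <;> omega

theorem Finset.sum_Icc_one_sub {M : Type*} [AddCommMonoid M] (φ : ℤ → M) (n : ℕ) :
    ∑ i ∈ Icc 1 n, φ (n - i) = ∑ j ∈ Ico 0 (n : ℤ), φ j := by
  simpa [neg_add_eq_sub, sum_Ico_add'] using sum_Icc_one_neg (fun j => φ (j + n)) n

section FunctionModel

variable {R : Type*} [CommRing R]

/- `t^k A(D)` sends `t^j` to `A(j) t^(j+k)`, so the bracket and the cocycle only involve the
values of `A` at integers; here they are defined for arbitrary `A : ℤ → R`. -/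

def bracketFun (x y : ℤ × (ℤ → R)) : ℤ × (ℤ → R) :=
  (x.1 + y.1, fun j => x.2 (j + y.1) * y.2 j - y.2 (j + x.1) * x.2 j)

noncomputable def psiFun (x y : ℤ × (ℤ → R)) : R :=
  if x.1 + y.1 = 0 then orientedSum (fun j => x.2 j * y.2 (j + x.1)) (-x.1) 0 else 0

theorem psiFun_of_add_eq_zero {x y : ℤ × (ℤ → R)} (h : x.1 + y.1 = 0) :
    psiFun x y = orientedSum (fun j => x.2 j * y.2 (j + x.1)) (-x.1) 0 :=
  if_pos h

theorem psiFun_of_add_ne_zero {x y : ℤ × (ℤ → R)} (h : x.1 + y.1 ≠ 0) : psiFun x y = 0 :=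
  if_neg h

theorem psiFun_self (x : ℤ × (ℤ → R)) : psiFun x x = 0 := by
  by_cases h : x.1 + x.1 = 0
  · rw [psiFun_of_add_eq_zero h, show x.1 = 0 by omega, neg_zero, orientedSum_self]
  · exact psiFun_of_add_ne_zero h

theorem psiFun_smul_add_left (k m : ℤ) (c : R) (A A' B : ℤ → R) :
    psiFun (k, c • A + A') (m, B) = c * psiFun (k, A) (m, B) + psiFun (k, A') (m, B) := by
  simp only [psiFun]
  split_ifs
  · simp only [Pi.add_apply, Pi.smul_apply, smul_eq_mul, add_mul, mul_assoc, orientedSum_add,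
      orientedSum_mul_left]
  · ring

theorem psiFun_smul_add_right (k m : ℤ) (c : R) (A B B' : ℤ → R) :
    psiFun (k, A) (m, c • B + B') = c * psiFun (k, A) (m, B) + psiFun (k, A) (m, B') := by
  simp only [psiFun]
  split_ifs
  · simp only [Pi.add_apply, Pi.smul_apply, smul_eq_mul, mul_add, mul_left_comm _ c,
      orientedSum_add, orientedSum_mul_left]
  · ring

theorem psiFun_cocycle (x y z : ℤ × (ℤ → R)) :
    psiFun (bracketFun x y) z + psiFun (bracketFun y z) x + psiFun (bracketFun z x) y = 0 := by
  obtain ⟨k₁, A⟩ := x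
  obtain ⟨k₂, B⟩ := y
  obtain ⟨k₃, C⟩ := z
  by_cases h : k₁ + k₂ + k₃ = 0
  swap
  · rw [psiFun_of_add_ne_zero, psiFun_of_add_ne_zero, psiFun_of_add_ne_zero, add_zero,
      add_zero] <;> simp only [bracketFun] <;> omega
  obtain rfl : k₃ = -(k₁ + k₂) := by omega
  rw [psiFun_of_add_eq_zero (by simp only [bracketFun]; ring),
    psiFun_of_add_eq_zero (by simp only [bracketFun]; ring),
    psiFun_of_add_eq_zero (by simp only [bracketFun]; ring)]
  simp only [bracketFun]
  set P : ℤ → R := fun j => A j * B (j + k₁) * C (j + (k₁ + k₂)) with hP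
  set Q : ℤ → R := fun j => A j * B (j - k₂) * C (j + k₁) with hQ
  have split {φ : ℤ → R} (s t a : ℤ) (hφ : ∀ j, φ j = Q (j + s) - P (j + t)) :
      orientedSum φ a 0 = orientedSum Q (a + s) s - orientedSum P (a + t) t := by
    rw [funext hφ, orientedSum_sub, orientedSum_comp_add_right, orientedSum_comp_add_right,
      zero_add, zero_add]
  rw [split k₂ 0 (-(k₁ + k₂)), split (-k₁) (-k₁) (-(k₂ + -(k₁ + k₂))),
    split 0 (-(k₁ + k₂)) (-(-(k₁ + k₂) + k₁))]
  · linear_combination (norm := ring_nf)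
      orientedSum_cycle Q (-k₁) k₂ 0 - orientedSum_cycle P (-(k₁ + k₂)) 0 (-k₁)
  all_goals intro j; simp only [hP, hQ]; ring_nf

end FunctionModel

namespace Polynomial

variable {R : Type*} [CommRing R]

noncomputable def intEval : R[X] →ₐ[R] ℤ → R := AlgHom.pi fun j => aeval (j : R)

theorem intEval_apply (f : R[X]) (j : ℤ) : intEval f j = f.eval (j : R) := by
  simp [intEval]

theorem intEval_comp_X_add_C (f : R[X]) (k : ℤ) :
    intEval (f.comp (X + C (k : R))) = fun j => intEval f (j + k) := by
  ext j
  simp [intEval_apply]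

end Polynomial

noncomputable def intEvalPair {R : Type*} [CommRing R] (x : ℤ × R[X]) : ℤ × (ℤ → R) :=
  (x.1, intEval x.2)

theorem intEvalPair_dBracket (x y : ℤ × ℂ[X]) :
    intEvalPair (dBracket x y) = bracketFun (intEvalPair x) (intEvalPair y) := by
  simp only [intEvalPair, dBracket, bracketFun, map_sub, map_mul, intEval_comp_X_add_C]
  rfl

theorem Psi_eq_psiFun (x y : ℤ × ℂ[X]) : Psi x y = psiFun (intEvalPair x) (intEvalPair y) := by
  obtain ⟨k, f⟩ := x
  obtain ⟨m, g⟩ := y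
  by_cases hkm : k + m = 0
  swap
  · rw [psiFun_of_add_ne_zero hkm, Psi, if_pos hkm]
  rw [psiFun_of_add_eq_zero hkm, Psi, if_neg (not_not.2 hkm)]
  simp only [intEvalPair, intEval_apply]
  split_ifs with hk
  · lift k to ℕ using hk
    rw [orientedSum_of_le _ (by omega), ← sum_Icc_one_neg]
    push_cast
    simp only [Int.toNat_natCast]
    exact sum_congr rfl fun i _ => by ring_nf
  · obtain ⟨n, rfl⟩ : ∃ n : ℕ, k = -n := ⟨(-k).toNat, by omega⟩
    simp only [neg_neg, Int.toNat_natCast]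
    rw [orientedSum_swap, orientedSum_of_le _ (by omega), ← sum_Icc_one_sub]
    push_cast
    exact congrArg _ (sum_congr rfl fun i _ => by ring_nf)

/-- `Ψ` is bilinear in the polynomial arguments, alternating, and satisfies the 2-cocycle
identity with respect to the bracket `dBracket`. -/
theorem Psi_is_two_cocycle :
    (∀ (k m : ℤ) (a : ℂ) (f f' g : Polynomial ℂ),
      Psi (k, a • f + f') (m, g) = a * Psi (k, f) (m, g) + Psi (k, f') (m, g)) ∧
    (∀ (k m : ℤ) (a : ℂ) (f g g' : Polynomial ℂ),
      Psi (k, f) (m, a • g + g') = a * Psi (k, f) (m, g) + Psi (k, f) (m, g')) ∧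
    (∀ x : ℤ × Polynomial ℂ, Psi x x = 0) ∧
    (∀ x y z : ℤ × Polynomial ℂ,
      Psi (dBracket x y) z + Psi (dBracket y z) x + Psi (dBracket z x) y = 0) := by
  simp only [Psi_eq_psiFun, intEvalPair_dBracket]
  refine ⟨fun k m a f f' g => ?_, fun k m a f g g' => ?_, fun x => psiFun_self _,
    fun x y z => psiFun_cocycle _ _ _⟩
  · simp only [intEvalPair, map_add, map_smul]
    exact psiFun_smul_add_left k m a _ _ _
  · simp only [intEvalPair, map_add, map_smul]
    exact psiFun_smul_add_right k m a _ _ _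
end
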